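/- For every g ∈ GL(n,ℂ) and X ∈ 𝒫_J, the matrix g X g^♯ lies in 𝒫_J, where g^♯ = J g* J. Moreover the action g·X := g X g^♯ of GL(n,ℂ) on 𝒫_J is transitive: for every X ∈ 𝒫_J there exists g with X = g J g^♯. -/

import Mathlib

/-! For `J` with `J = Jᴴ = J⁻¹`, the map `X ↦ J * X` identifies `𝒫_J` with the positive definite
matrices and turns `X ↦ g X g^♯` into the congruence `A ↦ (J g J) A (J g J)ᴴ`, which preserves
positivity. Transitivity is the factorisation `J X = Bᴴ B` with `B` invertible: then `g = J Bᴴ`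
satisfies `g J g^♯ = J Bᴴ B = X`. -/

open Matrix
open scoped ComplexOrder

noncomputable def sigJ (p q : ℕ) : Matrix (Fin p ⊕ Fin q) (Fin p ⊕ Fin q) ℂ :=
  Matrix.fromBlocks 1 0 0 (-1)

namespace Matrix

variable {n 𝕜 : Type*} [Fintype n] [DecidableEq n] [RCLike 𝕜]

theorem PosDef.exists_isUnit_eq_conjTranspose_mul_self {A : Matrix n n 𝕜} (hA : A.PosDef) :
    ∃ B : Matrix n n 𝕜, IsUnit B ∧ A = Bᴴ * B := by
  open scoped MatrixOrder in
  obtain ⟨B, rfl⟩ := CStarAlgebra.nonneg_iff_eq_star_mul_self.mp hA.posSemidef.nonneg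
  refine ⟨B, ?_, rfl⟩
  have hdet := ((isUnit_iff_isUnit_det _).mp hA.isUnit).ne_zero
  rw [det_mul] at hdet
  rw [isUnit_iff_isUnit_det, isUnit_iff_ne_zero]
  exact right_ne_zero_of_mul hdet

variable {J : Matrix n n 𝕜}

theorem conjTranspose_mul_mul_sharp (hJ : Jᴴ = J) (hJJ : J * J = 1) {g X : Matrix n n 𝕜}
    (hX : Xᴴ = J * X * J) :
    (g * X * (J * gᴴ * J))ᴴ = J * (g * X * (J * gᴴ * J)) * J := by
  simp only [conjTranspose_mul, conjTranspose_conjTranspose, hJ, hX, mul_assoc]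
  simp only [← mul_assoc J J, hJJ, one_mul, mul_one]

theorem mul_mul_mul_sharp (hJ : Jᴴ = J) (hJJ : J * J = 1) (g X : Matrix n n 𝕜) :
    J * (g * X * (J * gᴴ * J)) = (J * g * J) * (J * X) * (J * g * J)ᴴ := by
  simp only [conjTranspose_mul, hJ, mul_assoc]
  simp only [← mul_assoc J J, hJJ, one_mul]

theorem posDef_mul_mul_mul_sharp (hJ : Jᴴ = J) (hJJ : J * J = 1) {g X : Matrix n n 𝕜}
    (hg : IsUnit g) (hX : (J * X).PosDef) : (J * (g * X * (J * gᴴ * J))).PosDef := by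
  have hJ' := IsUnit.of_mul_eq_one J hJJ
  rw [mul_mul_mul_sharp hJ hJJ]
  exact hX.mul_mul_conjTranspose_same (vecMul_injective_iff_isUnit.mpr ((hJ'.mul hg).mul hJ'))

theorem exists_isUnit_eq_mul_mul_sharp (hJ : Jᴴ = J) (hJJ : J * J = 1) {X : Matrix n n 𝕜}
    (hX : (J * X).PosDef) : ∃ g : Matrix n n 𝕜, IsUnit g ∧ X = g * J * (J * gᴴ * J) := by
  obtain ⟨B, hB, hJX⟩ := hX.exists_isUnit_eq_conjTranspose_mul_self
  refine ⟨J * Bᴴ, (IsUnit.of_mul_eq_one J hJJ).mul hB.star, ?_⟩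
  calc X = J * (J * X) := by rw [← mul_assoc, hJJ, one_mul]
    _ = J * Bᴴ * J * (J * (J * Bᴴ)ᴴ * J) := by
      simp only [hJX, conjTranspose_mul, conjTranspose_conjTranspose, hJ, mul_assoc]
      simp only [← mul_assoc J J, hJJ, one_mul, mul_one]

end Matrix

theorem sigJ_conjTranspose (p q : ℕ) : (sigJ p q)ᴴ = sigJ p q := by
  simp [sigJ, fromBlocks_conjTranspose]

theorem sigJ_mul_self (p q : ℕ) : sigJ p q * sigJ p q = 1 := by
  simp [sigJ, fromBlocks_multiply]

/-- For `g ∈ GL(n,ℂ)` and `X ∈ 𝒫_J`, `g X g^♯ ∈ 𝒫_J` (with `g^♯ = J g* J`), and the action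
`g·X := g X g^♯` is transitive: every `X ∈ 𝒫_J` is of the form `g J g^♯`. -/
theorem stmt13 (p q : ℕ) :
    (∀ g X : Matrix (Fin p ⊕ Fin q) (Fin p ⊕ Fin q) ℂ, IsUnit g →
      Xᴴ = sigJ p q * X * sigJ p q → (sigJ p q * X).PosDef →
      ((g * X * (sigJ p q * gᴴ * sigJ p q))ᴴ =
          sigJ p q * (g * X * (sigJ p q * gᴴ * sigJ p q)) * sigJ p q ∧
        (sigJ p q * (g * X * (sigJ p q * gᴴ * sigJ p q))).PosDef)) ∧
    (∀ X : Matrix (Fin p ⊕ Fin q) (Fin p ⊕ Fin q) ℂ,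
      Xᴴ = sigJ p q * X * sigJ p q → (sigJ p q * X).PosDef →
      ∃ g : Matrix (Fin p ⊕ Fin q) (Fin p ⊕ Fin q) ℂ, IsUnit g ∧
        X = g * sigJ p q * (sigJ p q * gᴴ * sigJ p q)) := by
  have hJ := sigJ_conjTranspose p q
  have hJJ := sigJ_mul_self p q
  exact ⟨fun g X hg hX hJX => ⟨conjTranspose_mul_mul_sharp hJ hJJ hX,
      posDef_mul_mul_mul_sharp hJ hJJ hg hJX⟩,
    fun X _ hJX => exists_isUnit_eq_mul_mul_sharp hJ hJJ hJX⟩
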